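/- Let (Ω, 𝔉, μ) be a probability space, (E_m)_{m≥1} an i.i.d. sequence of exponential random variables with rate 1, and W = (2/π²) Σ_{m=1}^∞ E_m/(2m−1)². Then for every a ∈ {0,1} and every x ∈ ℝ, the Bernoulli logit likelihood admits the Gaussian scale-mixture representation (e^x)^a/(1+e^x) = (1/2)·e^{(a−1/2)x}·E[exp(−x²W/2)]. -/

import Mathlib

open MeasureTheory ProbabilityTheory Real Filter Finset Topology

/-!
With `S = ∑ E_m / (2m+1)²` the integral is the moment generating function of `S` at `-x²/π²`.
The partial sums of `S` are nonnegative and converge almost surely (their expectations are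
summable), so by dominated convergence and independence this is the infinite product of the
exponential Laplace transforms `(1 + x² / (π² (2m+1)²))⁻¹`, i.e. `1 / cosh (x/2)` by Euler's
product for `cosh`. Finally `e^{ax} / (1 + e^x) = e^{(a - 1/2) x} / (2 cosh (x/2))` for every `a`.
-/

lemma Finset.prod_range_two_mul {M : Type*} [CommMonoid M] (f : ℕ → M) (n : ℕ) :
    ∏ j ∈ range (2 * n), f j = (∏ k ∈ range n, f (2 * k)) * ∏ k ∈ range n, f (2 * k + 1) := by
  induction n with
  | zero => simp
  | succ n ih =>
    rw [Nat.mul_succ, prod_range_succ, prod_range_succ, ih, prod_range_succ, prod_range_succ,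
      mul_mul_mul_comm, mul_assoc]

theorem Real.tendsto_euler_sinh_prod (x : ℝ) :
    Tendsto (fun n : ℕ => π * x * ∏ j ∈ range n, (1 + x ^ 2 / ((j : ℝ) + 1) ^ 2))
      atTop (𝓝 (sinh (π * x))) := by
  have hfactor (j : ℕ) : (1 - (x * Complex.I) ^ 2 / ((j : ℂ) + 1) ^ 2 : ℂ)
      = ((1 + x ^ 2 / ((j : ℝ) + 1) ^ 2 : ℝ) : ℂ) := by
    push_cast
    rw [mul_pow, Complex.I_sq]
    ring
  have h := (Complex.continuous_im.tendsto _).comp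
    (Complex.tendsto_euler_sin_prod (x * Complex.I))
  simp_rw [hfactor, ← Complex.ofReal_prod, ← mul_assoc, Complex.sin_mul_I,
    mul_right_comm _ Complex.I] at h
  convert h using 2 with n
  · simp only [Function.comp_apply, Complex.mul_I_im]
    norm_cast
  · rw [Complex.mul_I_im, ← Complex.ofReal_mul, Complex.sinh_ofReal_re]

theorem Real.tendsto_euler_cosh_prod (x : ℝ) :
    Tendsto (fun n : ℕ => ∏ k ∈ range n, (1 + 4 * x ^ 2 / (2 * (k : ℝ) + 1) ^ 2))
      atTop (𝓝 (cosh (π * x))) := by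
  rcases eq_or_ne x 0 with rfl | hx
  · simp
  -- The sinh product at `2x` splits into its odd-index factors, the cosh product at `x`,
  -- and its even-index factors, the sinh product at `x`.
  have hsinh := (tendsto_euler_sinh_prod x).const_mul 2
  have hsinh_two := (tendsto_euler_sinh_prod (2 * x)).comp
    (tendsto_id.const_mul_atTop' two_pos)
  rw [← tendsto_mul_iff_of_ne_zero hsinh (by simp [hx, pi_ne_zero, sinh_eq_zero])]
  convert hsinh_two using 2 with n
  · simp only [Function.comp_apply, id, prod_range_two_mul]
    have hodd (k : ℕ) : (2 * x) ^ 2 / (2 * (k : ℝ) + 1 + 1) ^ 2 = x ^ 2 / ((k : ℝ) + 1) ^ 2 := by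
      field_simp
      ring
    push_cast
    simp_rw [hodd, mul_pow, show (2 : ℝ) ^ 2 = 4 by norm_num]
    ring
  · rw [mul_left_comm π, sinh_two_mul]
    ring

section Exponential

variable {r t : ℝ}

lemma expMeasure_eq_withDensity (r : ℝ) :
    expMeasure r = volume.withDensity (exponentialPDF r) := rfl

lemma measurable_exponentialPDF (r : ℝ) : Measurable (exponentialPDF r) :=
  (measurable_exponentialPDFReal r).ennreal_ofReal

lemma ae_nonneg_expMeasure (r : ℝ) : ∀ᵐ y ∂expMeasure r, 0 ≤ y := by
  simp only [ae_iff, not_le]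
  change expMeasure r (Set.Iio 0) = 0
  rw [expMeasure_eq_withDensity, withDensity_apply _ measurableSet_Iio]
  exact lintegral_exponentialPDF_of_nonpos le_rfl

lemma toReal_exponentialPDF_mul_exp (hr : 0 < r) (t y : ℝ) :
    (exponentialPDF r y).toReal * exp (t * y)
      = Set.indicator (Set.Ici 0) (fun y => r * exp ((t - r) * y)) y := by
  rcases le_or_gt 0 y with hy | hy
  · rw [exponentialPDF_of_nonneg hy, ENNReal.toReal_ofReal (by positivity),
      Set.indicator_of_mem (Set.mem_Ici.2 hy), mul_assoc, ← exp_add]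
    ring_nf
  · rw [exponentialPDF_of_neg hy, Set.indicator_of_notMem (by simpa using hy)]
    simp

lemma integrable_exp_mul_expMeasure (hr : 0 < r) (ht : t < r) :
    Integrable (fun y => exp (t * y)) (expMeasure r) := by
  rw [expMeasure_eq_withDensity, integrable_withDensity_iff_integrable_smul'
    (measurable_exponentialPDF r) (ae_of_all _ fun _ => ENNReal.ofReal_lt_top)]
  simp_rw [smul_eq_mul, toReal_exponentialPDF_mul_exp hr]
  rw [integrable_indicator_iff measurableSet_Ici, integrableOn_Ici_iff_integrableOn_Ioi]
  exact (integrableOn_exp_mul_Ioi (by linarith) 0).const_mul r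

lemma mgf_expMeasure (hr : 0 < r) (ht : t < r) : mgf id (expMeasure r) t = r / (r - t) := by
  rw [mgf, expMeasure_eq_withDensity, integral_withDensity_eq_integral_toReal_smul
    (measurable_exponentialPDF r) (ae_of_all _ fun _ => ENNReal.ofReal_lt_top)]
  simp_rw [id, smul_eq_mul, toReal_exponentialPDF_mul_exp hr]
  rw [integral_indicator measurableSet_Ici, integral_Ici_eq_integral_Ioi, integral_const_mul,
    integral_exp_mul_Ioi (by linarith), mul_zero, exp_zero, neg_div, ← div_neg, neg_sub, mul_one_div]

lemma integrable_id_expMeasure (hr : 0 < r) : Integrable id (expMeasure r) := by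
  convert integrable_pow_of_integrable_exp_mul (X := id) (half_pos hr).ne'
    (integrable_exp_mul_expMeasure hr (by linarith))
    (integrable_exp_mul_expMeasure hr (by linarith)) 1
  simp

end Exponential

section Series

variable {Ω : Type*} [MeasurableSpace Ω] {μ : Measure Ω}

lemma ae_nonneg_of_map_eq_expMeasure {X : Ω → ℝ} {r : ℝ} (hX : AEMeasurable X μ)
    (hdist : μ.map X = expMeasure r) : 0 ≤ᵐ[μ] X :=
  ae_of_ae_map (p := fun y => 0 ≤ y) hX (hdist ▸ ae_nonneg_expMeasure r)

lemma mgf_div_of_map_eq_expMeasure {X : Ω → ℝ} {r c t : ℝ} (hX : AEMeasurable X μ)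
    (hdist : μ.map X = expMeasure r) (hr : 0 < r) (hc : 0 < c) (ht : t < r * c) :
    mgf (fun ω => X ω / c) μ t = r / (r - t / c) := by
  have hdiv : (fun ω => X ω / c) = fun ω => c⁻¹ * X ω := funext fun ω => div_eq_inv_mul _ _
  rw [hdiv, mgf_const_mul, ← mgf_id_map hX, hdist, inv_mul_eq_div,
    mgf_expMeasure hr ((div_lt_iff₀ hc).2 ht)]

lemma ae_summable_mul_of_map_eq {X : ℕ → Ω → ℝ} {ν : Measure ℝ} (hX : ∀ m, Measurable (X m))
    (hdist : ∀ m, μ.map (X m) = ν) (hν : Integrable id ν) {w : ℕ → ℝ} (hw : Summable w) :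
    ∀ᵐ ω ∂μ, Summable fun m => w m * X m ω := by
  have heLpNorm (m : ℕ) : eLpNorm (w m • X m) 1 μ = ‖w m‖ₑ * eLpNorm id 1 ν := by
    rw [eLpNorm_const_smul, ← hdist m,
      eLpNorm_map_measure aestronglyMeasurable_id (hX m).aemeasurable]
    rfl
  have htsum : ∑' m, eLpNorm (w m • X m) 1 μ ≠ ⊤ := by
    simp_rw [heLpNorm, ENNReal.tsum_mul_right]
    exact ENNReal.mul_ne_top (tsum_enorm_ne_top_iff_summable_norm.2 hw.norm)
      (memLp_one_iff_integrable.2 hν).eLpNorm_lt_top.ne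
  have hnorm := summable_norm_of_tsum_eLpNorm_ne_top le_rfl
    (fun m => ((hX m).const_smul (w m)).aestronglyMeasurable) htsum
  filter_upwards [hnorm] with ω hω
  exact hω.of_norm

theorem tendsto_prod_mgf_of_iIndepFun [IsFiniteMeasure μ] {Y : ℕ → Ω → ℝ}
    (hY : ∀ m, Measurable (Y m)) (hindep : iIndepFun Y μ) (hnonneg : ∀ m, 0 ≤ᵐ[μ] Y m)
    (hsum : ∀ᵐ ω ∂μ, Summable fun m => Y m ω) {t : ℝ} (ht : t ≤ 0) :
    Tendsto (fun n => ∏ m ∈ range n, mgf (Y m) μ t) atTop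
      (𝓝 (mgf (fun ω => ∑' m, Y m ω) μ t)) := by
  simp_rw [← hindep.mgf_sum hY, mgf, Finset.sum_apply]
  refine tendsto_integral_of_dominated_convergence (fun _ => 1) (fun n => ?_)
    (integrable_const 1) (fun n => ?_) ?_
  · exact ((Finset.measurable_sum _ fun m _ => hY m).const_mul t).exp.aestronglyMeasurable
  · filter_upwards [ae_all_iff.2 hnonneg] with ω hω
    rw [norm_of_nonneg (exp_pos _).le, exp_le_one_iff]
    exact mul_nonpos_of_nonpos_of_nonneg ht (sum_nonneg fun m _ => hω m)
  · filter_upwards [hsum] with ω hω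
    exact ((hω.hasSum.tendsto_sum_nat).const_mul t).rexp

end Series

lemma exp_rpow_div_one_add_exp (a x : ℝ) :
    exp x ^ a / (1 + exp x) = 1 / 2 * exp ((a - 1 / 2) * x) * (cosh (x / 2))⁻¹ := by
  have hexp : exp x = exp (x / 2) * exp (x / 2) := by rw [← exp_add, add_halves]
  have hexp_mul : exp (x * a) = exp ((a - 1 / 2) * x) * exp (x / 2) := by
    rw [← exp_add]
    ring_nf
  rw [← exp_mul, hexp_mul, hexp, cosh_eq, exp_neg]
  field_simp
  ring

lemma summable_inv_two_mul_add_one_sq : Summable fun m : ℕ => ((2 * (m : ℝ) + 1) ^ 2)⁻¹ := by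
  refine ((summable_nat_add_iff 1).2 (Real.summable_nat_pow_inv.2 one_lt_two)).of_nonneg_of_le
    (fun m => by positivity) fun m => ?_
  gcongr
  push_cast
  linarith [(m.cast_nonneg : (0 : ℝ) ≤ m)]

theorem bernoulli_logit_pg_mixture_general
    {Ω : Type*} [MeasurableSpace Ω] (μ : Measure Ω) [IsProbabilityMeasure μ]
    (E : ℕ → Ω → ℝ) (hmeas : ∀ m, Measurable (E m))
    (hindep : iIndepFun E μ)
    (hdist : ∀ m, μ.map (E m) = expMeasure 1)
    (a : ℝ) (x : ℝ) :
    Real.exp x ^ a / (1 + Real.exp x)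
      = (1 / 2) * Real.exp ((a - 1 / 2) * x) *
          ∫ ω, Real.exp (-(x ^ 2 * ((2 / π ^ 2) * ∑' m : ℕ, E m ω / (2 * (m : ℝ) + 1) ^ 2)) / 2) ∂μ := by
  set Y : ℕ → Ω → ℝ := fun m ω => E m ω / (2 * (m : ℝ) + 1) ^ 2
  have hnonneg (m : ℕ) : 0 ≤ᵐ[μ] Y m :=
    (ae_nonneg_of_map_eq_expMeasure (hmeas m).aemeasurable (hdist m)).mono
      fun ω hω => div_nonneg hω (sq_nonneg _)
  have hsum : ∀ᵐ ω ∂μ, Summable fun m => Y m ω := by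
    simpa only [Y, div_eq_inv_mul] using ae_summable_mul_of_map_eq hmeas hdist
      (integrable_id_expMeasure one_pos) summable_inv_two_mul_add_one_sq
  have ht : -(x ^ 2 / π ^ 2) ≤ 0 := neg_nonpos.2 (by positivity)
  have hmgf (m : ℕ) : mgf (Y m) μ (-(x ^ 2 / π ^ 2))
      = (1 + 4 * (x / (2 * π)) ^ 2 / (2 * (m : ℝ) + 1) ^ 2)⁻¹ := by
    rw [mgf_div_of_map_eq_expMeasure (hmeas m).aemeasurable (hdist m) one_pos (by positivity)
      (ht.trans_lt (by positivity)), one_div]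
    congr 1
    field_simp
    ring
  have hprod := tendsto_prod_mgf_of_iIndepFun (Y := Y) (fun m => (hmeas m).div_const _)
    (hindep.comp _ fun m => measurable_id.div_const _) hnonneg hsum ht
  simp_rw [hmgf, prod_inv_distrib] at hprod
  have hcosh := (tendsto_euler_cosh_prod (x / (2 * π))).inv₀ (cosh_pos _).ne'
  rw [show π * (x / (2 * π)) = x / 2 by field_simp] at hcosh
  rw [exp_rpow_div_one_add_exp, ← tendsto_nhds_unique hprod hcosh, mgf]
  congr 3 with ω
  simp only [Y]
  congr 1
  ring

/-- Let `(E_m)` be i.i.d. exponential rate-1 random variables on a probability space and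
`W = (2 / π²) ∑' m, E m / (2m + 1)²` (the PG(1,0) random variable). Then for every
`a ∈ {0, 1}` and every `x ∈ ℝ`, the Bernoulli logit likelihood admits the Gaussian
scale-mixture representation
`(e^x)^a / (1 + e^x) = (1/2) · e^{(a - 1/2) x} · E[exp (-x² W / 2)]`. -/
theorem bernoulli_logit_pg_mixture
    {Ω : Type*} [MeasurableSpace Ω] (μ : Measure Ω) [IsProbabilityMeasure μ]
    (E : ℕ → Ω → ℝ) (hmeas : ∀ m, Measurable (E m))
    (hindep : iIndepFun E μ)
    (hdist : ∀ m, μ.map (E m) = expMeasure 1)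
    (a : ℝ) (ha : a = 0 ∨ a = 1) (x : ℝ) :
    Real.exp x ^ a / (1 + Real.exp x)
      = (1 / 2) * Real.exp ((a - 1 / 2) * x) *
          ∫ ω, Real.exp (-(x ^ 2 * ((2 / π ^ 2) * ∑' m : ℕ, E m ω / (2 * (m : ℝ) + 1) ^ 2)) / 2) ∂μ :=
  bernoulli_logit_pg_mixture_general μ E hmeas hindep hdist a x
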